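/- For s₁ < 0 the Fourier transform does not map L²(ℝⁿ, w_{s₁}) boundedly into L²(ℝⁿ): there is no constant C such that ‖Ff‖_{L²} ≤ C ‖w_{s₁} f‖_{L²} for all Schwartz f. -/

import Mathlib

/-
Translating a fixed bump `g` by a far-away vector `a` only multiplies its Fourier transform by
the unimodular factor `exp (-i⟪a, ξ⟫)`, so `‖F(g(· - a))‖₂ = ‖Fg‖₂`. On the support of the
translate, however, the weight is at most `(1 + (‖a‖ - R)²) ^ (s₁ / 2)`, which tends to `0`
because `s₁ < 0`. A bound `‖Ff‖₂ ≤ C ‖w_{s₁} f‖₂` would therefore force `‖Fg‖₂ = 0`, which is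
impossible: `Fg` is continuous and `Fg(0)` is a nonzero multiple of `∫ g`.
-/

open MeasureTheory SchwartzMap
open scoped RealInnerProductSpace ENNReal

noncomputable def w (n : ℕ) (α : ℝ) (x : EuclideanSpace ℝ (Fin n)) : ℝ :=
  (1 + ‖x‖ ^ 2) ^ (α / 2)

noncomputable def Fdef (n : ℕ) (f : EuclideanSpace ℝ (Fin n) → ℂ)
    (ξ : EuclideanSpace ℝ (Fin n)) : ℂ :=
  (((2 * Real.pi) ^ (-(n : ℝ) / 2) : ℝ) : ℂ) *
    ∫ x, Complex.exp (-Complex.I * (⟪x, ξ⟫ : ℝ)) * f x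

open Filter Topology
open scoped ContDiff

variable {n : ℕ}

lemma norm_exp_neg_I_mul (r : ℝ) : ‖Complex.exp (-Complex.I * r)‖ = 1 := by
  rw [neg_mul, mul_comm, ← neg_mul, ← Complex.ofReal_neg, Complex.norm_exp_ofReal_mul_I]

lemma integral_fourier_comp_sub (f : EuclideanSpace ℝ (Fin n) → ℂ)
    (a ξ : EuclideanSpace ℝ (Fin n)) :
    ∫ x, Complex.exp (-Complex.I * (⟪x, ξ⟫ : ℝ)) * f (x - a) =
      Complex.exp (-Complex.I * (⟪a, ξ⟫ : ℝ)) *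
        ∫ x, Complex.exp (-Complex.I * (⟪x, ξ⟫ : ℝ)) * f x := by
  rw [← integral_add_right_eq_self _ a, ← integral_const_mul]
  congr 1 with x
  rw [inner_add_left, add_sub_cancel_right, Complex.ofReal_add, mul_add, Complex.exp_add]
  ring

lemma norm_Fdef_comp_sub (f : EuclideanSpace ℝ (Fin n) → ℂ) (a ξ : EuclideanSpace ℝ (Fin n)) :
    ‖Fdef n (fun x => f (x - a)) ξ‖ = ‖Fdef n f ξ‖ := by
  simp only [Fdef, integral_fourier_comp_sub, norm_mul, norm_exp_neg_I_mul, one_mul]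

lemma eLpNorm_Fdef_comp_sub (f : EuclideanSpace ℝ (Fin n) → ℂ) (a : EuclideanSpace ℝ (Fin n))
    (p : ℝ≥0∞) (μ : Measure (EuclideanSpace ℝ (Fin n))) :
    eLpNorm (Fdef n (fun x => f (x - a))) p μ = eLpNorm (Fdef n f) p μ :=
  eLpNorm_congr_norm_ae (ae_of_all _ (norm_Fdef_comp_sub f a))

lemma continuous_Fdef {f : EuclideanSpace ℝ (Fin n) → ℂ} (hf : Integrable f) :
    Continuous (Fdef n f) := by
  have hchar : Continuous fun p : EuclideanSpace ℝ (Fin n) × EuclideanSpace ℝ (Fin n) =>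
      Complex.exp (-Complex.I * (⟪p.1, p.2⟫ : ℝ)) := by fun_prop
  refine continuous_const.mul (continuous_of_dominated (bound := fun x => ‖f x‖) (fun ξ => ?_)
    (fun ξ => ae_of_all _ fun x => ?_) hf.norm (ae_of_all _ fun x => ?_))
  · exact (hchar.comp (continuous_id.prodMk continuous_const)).aestronglyMeasurable.mul
      hf.aestronglyMeasurable
  · rw [norm_mul, norm_exp_neg_I_mul, one_mul]
  · exact (hchar.comp (continuous_const.prodMk continuous_id)).mul continuous_const

lemma Fdef_zero (f : EuclideanSpace ℝ (Fin n) → ℂ) :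
    Fdef n f 0 = (((2 * Real.pi) ^ (-(n : ℝ) / 2) : ℝ) : ℂ) * ∫ x, f x := by
  simp [Fdef]

lemma eLpNorm_Fdef_ne_zero {f : EuclideanSpace ℝ (Fin n) → ℂ} (hf : Integrable f)
    (hint : ∫ x, f x ≠ 0) {p : ℝ≥0∞} (hp : p ≠ 0) : eLpNorm (Fdef n f) p volume ≠ 0 := by
  have hcont := continuous_Fdef hf
  have hF0 : Fdef n f 0 ≠ 0 := by
    rw [Fdef_zero]
    exact mul_ne_zero (by exact_mod_cast (Real.rpow_pos_of_pos Real.two_pi_pos _).ne') hint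
  rw [Ne, eLpNorm_eq_zero_iff hcont.aestronglyMeasurable hp]
  intro h
  exact hF0 (congrFun ((hcont.ae_eq_iff_eq volume continuous_const).1 h) 0)

lemma w_pos (n : ℕ) (s : ℝ) (x : EuclideanSpace ℝ (Fin n)) : 0 < w n s x :=
  Real.rpow_pos_of_pos (by positivity) _

lemma w_le_of_le_norm {s r : ℝ} (hs : s ≤ 0) (hr : 0 ≤ r)
    {x : EuclideanSpace ℝ (Fin n)} (hx : r ≤ ‖x‖) : w n s x ≤ (1 + r ^ 2) ^ (s / 2) :=
  Real.rpow_le_rpow_of_nonpos (by positivity) (by gcongr) (by linarith)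

lemma tendsto_one_add_sq_rpow_atTop {s : ℝ} (hs : s < 0) :
    Tendsto (fun r : ℝ => (1 + r ^ 2) ^ (s / 2)) atTop (𝓝 0) := by
  have h := tendsto_rpow_neg_atTop (by linarith : 0 < -(s / 2))
  rw [neg_neg] at h
  exact h.comp (tendsto_atTop_add_const_left atTop 1 (tendsto_pow_atTop two_ne_zero))

lemma ENNReal.eq_zero_of_eventually_le_mul_ofReal {K c : ℝ≥0∞} (hc : c ≠ ⊤) {δ : ℝ → ℝ}
    (hδ : Tendsto δ atTop (𝓝 0)) (h : ∀ᶠ r in atTop, K ≤ ENNReal.ofReal (δ r) * c) : K = 0 := by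
  have hlim := ENNReal.Tendsto.mul_const (ENNReal.tendsto_ofReal hδ) (Or.inr hc)
  rw [ENNReal.ofReal_zero, zero_mul] at hlim
  exact nonpos_iff_eq_zero.1 (ge_of_tendsto hlim h)

lemma eLpNorm_w_mul_comp_sub_le {s R r : ℝ} (hs : s ≤ 0) (hr : 0 ≤ r)
    {f : EuclideanSpace ℝ (Fin n) → ℂ} (hf : AEStronglyMeasurable f)
    (hsupp : ∀ y, f y ≠ 0 → ‖y‖ ≤ R) {a : EuclideanSpace ℝ (Fin n)} (ha : R + r ≤ ‖a‖)
    (p : ℝ≥0∞) :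
    eLpNorm (fun x => (w n s x : ℂ) * f (x - a)) p volume ≤
      ENNReal.ofReal ((1 + r ^ 2) ^ (s / 2)) * eLpNorm f p volume := by
  have hbound : ∀ x, ‖(w n s x : ℂ) * f (x - a)‖ ≤ (1 + r ^ 2) ^ (s / 2) * ‖f (x - a)‖ := by
    intro x
    rcases eq_or_ne (f (x - a)) 0 with h | h
    · simp [h]
    have hx : r ≤ ‖x‖ := by
      have := norm_sub_norm_le a x
      rw [norm_sub_rev] at this
      linarith [hsupp _ h]
    rw [norm_mul, Complex.norm_real, Real.norm_of_nonneg (w_pos n s x).le]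
    gcongr
    exact w_le_of_le_norm hs hr hx
  calc eLpNorm (fun x => (w n s x : ℂ) * f (x - a)) p volume
      ≤ ENNReal.ofReal ((1 + r ^ 2) ^ (s / 2)) * eLpNorm (fun x => f (x - a)) p volume :=
        eLpNorm_le_mul_eLpNorm_of_ae_le_mul (ae_of_all _ hbound) p
    _ = ENNReal.ofReal ((1 + r ^ 2) ^ (s / 2)) * eLpNorm f p volume := by
        congr 1
        exact eLpNorm_comp_measurePreserving hf (measurePreserving_sub_right volume a)

lemma exists_contDiff_hasCompactSupport_integral_ne_zero :
    ∃ g : EuclideanSpace ℝ (Fin n) → ℂ, ContDiff ℝ ∞ g ∧ HasCompactSupport g ∧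
      (∀ y, g y ≠ 0 → ‖y‖ ≤ 1) ∧ ∫ x, g x ≠ 0 := by
  let φ : ContDiffBump (0 : EuclideanSpace ℝ (Fin n)) := ⟨1 / 2, 1, by norm_num, by norm_num⟩
  refine ⟨fun x => (φ x : ℂ), Complex.ofRealCLM.contDiff.comp φ.contDiff,
    φ.hasCompactSupport.comp_left Complex.ofReal_zero, fun y hy => ?_, ?_⟩
  · have : y ∈ Function.support φ := fun h => hy (by simp [h])
    rw [φ.support_eq, mem_ball_zero_iff] at this
    exact this.le
  · rw [show ∫ x, (φ x : ℂ) = ((∫ x, φ x : ℝ) : ℂ) from integral_ofReal]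
    exact_mod_cast φ.integral_pos.ne'

/-- For s₁ < 0 (and n ≥ 1), F is not bounded from L²(ℝⁿ, w_{s₁}) to L²(ℝⁿ): no constant
C satisfies ‖Ff‖₂ ≤ C ‖w_{s₁} f‖₂ for all Schwartz f. -/
theorem stmt16 (n : ℕ) (hn : 1 ≤ n) (s₁ : ℝ) (hs₁ : s₁ < 0) :
    ¬ ∃ C : ℝ, ∀ f : SchwartzMap (EuclideanSpace ℝ (Fin n)) ℂ,
      eLpNorm (Fdef n (⇑f)) 2 volume ≤
        ENNReal.ofReal C * eLpNorm (fun x => (w n s₁ x : ℂ) * f x) 2 volume := by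
  rintro ⟨C, hC⟩
  obtain ⟨g, hg_smooth, hg_supp, hg_ball, hg_int⟩ :=
    exists_contDiff_hasCompactSupport_integral_ne_zero (n := n)
  have hg_cont : Continuous g := hg_smooth.continuous
  let e := EuclideanSpace.single (⟨0, hn⟩ : Fin n) (1 : ℝ)
  have hFg_le : ∀ r : ℝ, 0 ≤ r → eLpNorm (Fdef n g) 2 volume ≤
      ENNReal.ofReal ((1 + r ^ 2) ^ (s₁ / 2)) * (ENNReal.ofReal C * eLpNorm g 2 volume) := by
    intro r hr
    have ha : 1 + r ≤ ‖(1 + r) • e‖ := by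
      simp [e, norm_smul, abs_of_nonneg (by linarith : 0 ≤ 1 + r)]
    let ga := (hg_supp.toSchwartzMap hg_smooth).compSubConstCLM ℂ ((1 + r) • e)
    have hga : ⇑ga = fun x => g (x - (1 + r) • e) := rfl
    have h := hC ga
    rw [hga, eLpNorm_Fdef_comp_sub] at h
    have hw := eLpNorm_w_mul_comp_sub_le hs₁.le hr hg_cont.aestronglyMeasurable hg_ball ha 2
    exact (h.trans (by gcongr)).trans_eq (mul_left_comm _ _ _)
  refine eLpNorm_Fdef_ne_zero (hg_cont.integrable_of_hasCompactSupport hg_supp) hg_int two_ne_zero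
    (ENNReal.eq_zero_of_eventually_le_mul_ofReal ?_ (tendsto_one_add_sq_rpow_atTop hs₁)
      ((eventually_ge_atTop 0).mono hFg_le))
  exact ENNReal.mul_ne_top ENNReal.ofReal_ne_top
    (hg_cont.memLp_of_hasCompactSupport hg_supp).2.ne
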